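/- Let D be a nonempty closed convex subset of a real Hilbert space H, let (C_i)_{i=1}^m be closed convex subsets of D with C := ⋂_{i=1}^m C_i ≠ ∅, let Ω be a finite fit set of index vectors over {1,…,m} with weights w : Ω → (0,1] summing to 1, and let (λ_k) be a steering sequence and u, x⁰ ∈ D. Then the sequence x^{k+1} = λ_k u + (1 − λ_k) ∑_{t∈Ω} w(t) P[t](x^k), where P[t] is the composition of metric projections P_{C_{t_q}} ⋯ P_{C_{t₁}} along the index vector t, converges strongly to P_C(u). -/

import Mathlib

open Filter
open scoped RealInnerProductSpace

lemma sq_le_imp_le {a b : ℝ} (ha : 0 ≤ a) (hb : 0 ≤ b) (h : a^2 ≤ b^2) : a ≤ b := by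
  nlinarith

open Finset in
lemma xu_lemma (a b c mu : ℕ → ℝ) (ha : ∀ k, 0 ≤ a k)
    (hmu : ∀ k, mu k ∈ Set.Icc (0:ℝ) 1) (hmudiv : ¬ Summable mu)
    (hc : Summable c) (hc0 : ∀ k, 0 ≤ c k)
    (hb : ∀ ε > (0:ℝ), ∃ N, ∀ k ≥ N, b k ≤ ε)
    (hrec : ∀ k, a (k + 1) ≤ (1 - mu k) * a k + mu k * b k + c k) :
    Tendsto a atTop (nhds 0) := by
  rw [Metric.tendsto_atTop]
  intro ε hε
  have hε6 : 0 < ε / 6 := by linarith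
  obtain ⟨N₁, hN₁⟩ := hb (ε / 6) hε6
  have htail : Tendsto (fun n => ∑' k, c (k + n)) atTop (nhds 0) := tendsto_sum_nat_add c
  obtain ⟨N₂, hN₂⟩ := (Metric.tendsto_atTop.mp htail) (ε / 6) hε6
  set N := max N₁ N₂ with hN
  have hcN : ∀ n, ∑ j ∈ Finset.Ico N n, c j ≤ ε / 6 := by
    intro n
    have h1 : ∑ j ∈ Finset.Ico N n, c j ≤ ∑' k, c (k + N) := by
      rcases le_or_gt N n with h | h
      · have e : ∑ j ∈ Finset.Ico N n, c j = ∑ j ∈ Finset.range (n - N), c (j + N) := by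
          rw [Finset.sum_Ico_eq_sum_range]
          exact Finset.sum_congr rfl (fun j _ => by rw [Nat.add_comm])
        rw [e]
        exact Summable.sum_le_tsum _ (fun i _ => hc0 _) ((summable_nat_add_iff N).mpr hc)
      · rw [Finset.Ico_eq_empty (by omega)]
        simpa using tsum_nonneg (fun k => hc0 (k + N))
    have h2 : ∑' k, c (k + N) ≤ ε / 6 := by
      have := hN₂ N (le_max_right _ _)
      rw [Real.dist_eq, sub_zero, abs_of_nonneg (tsum_nonneg (fun k => hc0 (k + N)))] at this
      exact this.le
    linarith
  have hunroll : ∀ n, N ≤ n → a n ≤ (∏ j ∈ Finset.Ico N n, (1 - mu j)) * a N + ε / 6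
      + ∑ j ∈ Finset.Ico N n, c j := by
    intro n hn
    induction n with
    | zero =>
      have hN0 : N = 0 := Nat.le_zero.mp hn
      rw [hN0]
      simp only [Finset.Ico_self, Finset.prod_empty, Finset.sum_empty, one_mul, add_zero]
      linarith [ha 0]
    | succ n ih =>
      rcases Nat.lt_or_ge N (n+1) with h | h
      · have hn' : N ≤ n := by omega
        have ihn := ih hn'
        have hbn : b n ≤ ε / 6 := hN₁ n (le_trans (le_max_left _ _) hn')
        obtain ⟨hmu0, hmu1⟩ := hmu n
        have hprod_nonneg : (0:ℝ) ≤ ∏ j ∈ Finset.Ico N n, (1 - mu j) :=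
          Finset.prod_nonneg (fun j _ => by have := (hmu j).2; linarith)
        have e1 : Finset.Ico N (n+1) = insert n (Finset.Ico N n) := by
          rw [Nat.Ico_succ_right_eq_insert_Ico hn']
        have e2 : ∏ j ∈ Finset.Ico N (n+1), (1 - mu j)
            = (1 - mu n) * ∏ j ∈ Finset.Ico N n, (1 - mu j) := by
          rw [e1, Finset.prod_insert (by simp)]
        have e3 : ∑ j ∈ Finset.Ico N (n+1), c j = c n + ∑ j ∈ Finset.Ico N n, c j := by
          rw [e1, Finset.sum_insert (by simp)]
        have hr := hrec n
        have hcn : (0:ℝ) ≤ ∑ j ∈ Finset.Ico N n, c j := Finset.sum_nonneg (fun j _ => hc0 j)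
        rw [e2, e3]
        nlinarith [mul_le_mul_of_nonneg_left ihn (by linarith : (0:ℝ) ≤ 1 - mu n),
          mul_le_mul_of_nonneg_left hbn hmu0]
      · have hNe : N = n + 1 := by omega
        rw [hNe]
        simp only [Finset.Ico_self, Finset.prod_empty, Finset.sum_empty, one_mul, add_zero]
        linarith [ha (n+1)]
  have hprod0 : Tendsto (fun n => (∏ j ∈ Finset.Ico N n, (1 - mu j)) * a N) atTop (nhds 0) := by
    have hmono : ∀ n, (0:ℝ) ≤ ∏ j ∈ Finset.Ico N n, (1 - mu j) ∧
        (∏ j ∈ Finset.Ico N n, (1 - mu j)) ≤ Real.exp (-(∑ j ∈ Finset.Ico N n, mu j)) := by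
      intro n
      constructor
      · exact Finset.prod_nonneg (fun j _ => by have := (hmu j).2; linarith)
      · calc (∏ j ∈ Finset.Ico N n, (1 - mu j))
            ≤ ∏ j ∈ Finset.Ico N n, Real.exp (-(mu j)) := by
              apply Finset.prod_le_prod (fun j _ => by have := (hmu j).2; linarith)
              intro j _
              have := Real.add_one_le_exp (-(mu j))
              linarith
          _ = Real.exp (-(∑ j ∈ Finset.Ico N n, mu j)) := by
              rw [← Real.exp_sum, Finset.sum_neg_distrib]
    have hsum : Tendsto (fun n => ∑ j ∈ Finset.Ico N n, mu j) atTop atTop := by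
      have hps : Tendsto (fun n => ∑ j ∈ Finset.range n, mu j) atTop atTop :=
        (not_summable_iff_tendsto_nat_atTop_of_nonneg (fun k => (hmu k).1)).mp hmudiv
      have : Tendsto (fun n => ∑ j ∈ Finset.range n, mu j - ∑ j ∈ Finset.range N, mu j)
          atTop atTop := tendsto_atTop_add_const_right _ _ hps
      apply this.congr'
      filter_upwards [eventually_ge_atTop N] with n hn
      rw [Finset.sum_Ico_eq_sub _ hn]
    have hexp0 : Tendsto (fun n => Real.exp (-(∑ j ∈ Finset.Ico N n, mu j))) atTop (nhds 0) :=
      Real.tendsto_exp_atBot.comp (tendsto_neg_atBot_iff.mpr hsum)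
    have hp0 : Tendsto (fun n => ∏ j ∈ Finset.Ico N n, (1 - mu j)) atTop (nhds 0) :=
      squeeze_zero (fun n => (hmono n).1) (fun n => (hmono n).2) hexp0
    simpa using hp0.mul_const (a N)
  obtain ⟨N₃, hN₃⟩ := (Metric.tendsto_atTop.mp hprod0) (ε / 6) hε6
  refine ⟨max N N₃, fun n hn => ?_⟩
  have h1 := hunroll n (le_trans (le_max_left _ _) hn)
  have h2 := hN₃ n (le_trans (le_max_right _ _) hn)
  rw [Real.dist_eq, sub_zero] at h2 ⊢
  rw [abs_of_nonneg (ha n)]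
  have := le_abs_self ((∏ j ∈ Finset.Ico N n, (1 - mu j)) * a N)
  have := hcN n
  linarith

lemma ultra_real_limit (U : Ultrafilter ℕ) (f : ℕ → ℝ) (B : ℝ) (hB : ∀ k, |f k| ≤ B) :
    ∃ l : ℝ, Tendsto f U (nhds l) := by
  have hcomp : IsCompact (Set.Icc (-B) B) := isCompact_Icc
  have hmem : Set.Icc (-B) B ∈ Ultrafilter.map f U :=
    Filter.mem_map.mpr (Filter.univ_mem' fun k => abs_le.mp (hB k))
  obtain ⟨l, _, hl⟩ := hcomp.ultrafilter_le_nhds' (Ultrafilter.map f U) hmem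
  exact ⟨l, hl⟩

lemma exists_weak_ultra_limit {H : Type*} [NormedAddCommGroup H] [InnerProductSpace ℝ H]
    [CompleteSpace H] (U : Ultrafilter ℕ) (y : ℕ → H) (M : ℝ) (hM : ∀ k, ‖y k‖ ≤ M) :
    ∃ q : H, ‖q‖ ≤ M ∧ ∀ v : H, Tendsto (fun k => (inner ℝ v (y k) : ℝ)) U (nhds (inner ℝ v q)) := by
  have hlim : ∀ v : H, ∃ l : ℝ, Tendsto (fun k => (inner ℝ v (y k) : ℝ)) U (nhds l) := by
    intro v
    apply ultra_real_limit U _ (‖v‖ * M)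
    intro k
    calc |(inner ℝ v (y k) : ℝ)| ≤ ‖v‖ * ‖y k‖ := abs_real_inner_le_norm v (y k)
      _ ≤ ‖v‖ * M := by
        have := hM k
        nlinarith [norm_nonneg v, norm_nonneg (y k)]
  choose g hg using hlim
  have hadd : ∀ v w : H, g (v + w) = g v + g w := by
    intro v w
    have h1 : Tendsto (fun k => (inner ℝ (v + w) (y k) : ℝ)) U (nhds (g v + g w)) := by
      have := (hg v).add (hg w)
      apply this.congr
      intro k
      rw [inner_add_left]
    exact tendsto_nhds_unique (hg (v + w)) h1
  have hsmul : ∀ (c : ℝ) (v : H), g (c • v) = c * g v := by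
    intro c v
    have h1 : Tendsto (fun k => (inner ℝ (c • v) (y k) : ℝ)) U (nhds (c * g v)) := by
      have := (hg v).const_mul c
      apply this.congr
      intro k
      rw [real_inner_smul_left]
    exact tendsto_nhds_unique (hg (c • v)) h1
  have hbound : ∀ v : H, ‖g v‖ ≤ M * ‖v‖ := by
    intro v
    have h1 : Tendsto (fun k => |(inner ℝ v (y k) : ℝ)|) U (nhds |g v|) :=
      (hg v).abs
    have h2 : ∀ k, |(inner ℝ v (y k) : ℝ)| ≤ M * ‖v‖ := by
      intro k
      calc |(inner ℝ v (y k) : ℝ)| ≤ ‖v‖ * ‖y k‖ := abs_real_inner_le_norm v (y k)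
        _ ≤ M * ‖v‖ := by
          have := hM k
          nlinarith [norm_nonneg v, norm_nonneg (y k)]
    have := le_of_tendsto h1 (Filter.Eventually.of_forall h2)
    simpa [Real.norm_eq_abs] using this
  let gl : H →ₗ[ℝ] ℝ :=
    { toFun := g, map_add' := hadd, map_smul' := hsmul }
  let gc : H →L[ℝ] ℝ := LinearMap.mkContinuous gl M (fun v => hbound v)
  set q := (InnerProductSpace.toDual ℝ H).symm gc with hq
  have hqv : ∀ v : H, (inner ℝ v q : ℝ) = g v := by
    intro v
    have h := InnerProductSpace.toDual_symm_apply (𝕜 := ℝ) (E := H) (x := v) (y := gc)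
    rw [real_inner_comm, ← hq] at h
    exact h
  refine ⟨q, ?_, fun v => by rw [hqv v]; exact hg v⟩
  have : ‖q‖ = ‖gc‖ := ((InnerProductSpace.toDual ℝ H).symm.norm_map gc)
  rw [this]
  exact gc.opNorm_le_bound ((norm_nonneg (y 0)).trans (hM 0)) hbound

set_option maxHeartbeats 1000000 in
theorem stmt_15 {H : Type*} [NormedAddCommGroup H] [InnerProductSpace ℝ H] [CompleteSpace H]
    (D : Set H) (hne : D.Nonempty) (hcl : IsClosed D) (hconv : Convex ℝ D)
    (m : ℕ) (hm : 0 < m)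
    (C : Fin m → Set H) (hCsub : ∀ i, C i ⊆ D)
    (hCcl : ∀ i, IsClosed (C i)) (hCconv : ∀ i, Convex ℝ (C i))
    (hC : (⋂ i, C i).Nonempty)
    (P : Fin m → H → H)
    (hP : ∀ i, ∀ x, P i x ∈ C i ∧ ∀ z ∈ C i, ‖x - P i x‖ ≤ ‖x - z‖)
    (Ω : Finset (List (Fin m))) (hfit : ∀ i : Fin m, ∃ t ∈ Ω, i ∈ t)
    (w : List (Fin m) → ℝ) (hw : ∀ t ∈ Ω, 0 < w t ∧ w t ≤ 1)
    (hw1 : ∑ t ∈ Ω, w t = 1)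
    (lam : ℕ → ℝ) (hlam01 : ∀ k, lam k ∈ Set.Icc (0 : ℝ) 1)
    (hlam0 : Filter.Tendsto lam Filter.atTop (nhds 0))
    (hlamdiv : ¬ Summable lam)
    (hlamvar : Summable fun k => |lam (k + 1) - lam k|)
    (u : H) (hu : u ∈ D) (x : ℕ → H) (hx0 : x 0 ∈ D)
    (hiter : ∀ k, x (k + 1) =
      lam k • u + (1 - lam k) • ∑ t ∈ Ω, w t • t.foldl (fun y i => P i y) (x k)) :
    ∃ p ∈ ⋂ i, C i, (∀ z ∈ ⋂ i, C i, ‖u - p‖ ≤ ‖u - z‖) ∧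
      Filter.Tendsto x Filter.atTop (nhds p) := by
  classical
  have hVI : ∀ i x, ∀ z ∈ C i, ⟪x - P i x, z - P i x⟫ ≤ 0 := by
    intro i x
    have hmem := (hP i x).1
    have hmin := (hP i x).2
    haveI : Nonempty (C i) := ⟨⟨P i x, hmem⟩⟩
    rw [← norm_eq_iInf_iff_real_inner_le_zero (hCconv i) hmem]
    apply le_antisymm
    · exact le_ciInf fun z => hmin z z.2
    · refine ciInf_le ⟨0, ?_⟩ (⟨P i x, hmem⟩ : C i)
      rintro r ⟨z, rfl⟩
      exact norm_nonneg _
  have hstep : ∀ i x, ∀ c ∈ C i, ‖P i x - c‖^2 + ‖x - P i x‖^2 ≤ ‖x - c‖^2 := by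
    intro i x c hc
    have h1 := hVI i x c hc
    have e : x - c = (x - P i x) - (c - P i x) := by abel
    have expand : ‖x - c‖^2 = ‖x - P i x‖^2 - 2*⟪x - P i x, c - P i x⟫ + ‖c - P i x‖^2 := by
      rw [e]; exact norm_sub_sq_real _ _
    rw [norm_sub_rev (P i x) c, expand]
    linarith
  have hPnon : ∀ i x y, ‖P i x - P i y‖ ≤ ‖x - y‖ := by
    intro i x y
    have h1 := hVI i x (P i y) (hP i y).1
    have h2 := hVI i y (P i x) (hP i x).1
    have key : ‖P i x - P i y‖^2 ≤ ⟪x - y, P i x - P i y⟫ := by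
      have h1' : ⟪P i x - x, P i x - P i y⟫ ≤ 0 := by
        have e : ⟪P i x - x, P i x - P i y⟫ = ⟪x - P i x, P i y - P i x⟫ := by
          rw [← neg_sub x (P i x), ← neg_sub (P i y) (P i x), inner_neg_neg]
        rw [e]; exact h1
      have esum : ⟪P i x - x, P i x - P i y⟫ + ⟪y - P i y, P i x - P i y⟫
          = ‖P i x - P i y‖^2 - ⟪x - y, P i x - P i y⟫ := by
        rw [← inner_add_left]
        have e : (P i x - x) + (y - P i y) = (P i x - P i y) - (x - y) := by abel
        rw [e, inner_sub_left, real_inner_self_eq_norm_sq]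
      linarith
    have h3 := real_inner_le_norm (x - y) (P i x - P i y)
    rcases le_or_gt ‖P i x - P i y‖ 0 with h | h
    · exact le_trans h (norm_nonneg _)
    · nlinarith
  -- string operators
  set S : List (Fin m) → H → H := fun t y => t.foldl (fun y i => P i y) y with hSdef
  have hScons : ∀ (i : Fin m) t (y : H), S (i :: t) y = S t (P i y) := fun i t y => rfl
  have hSnil : ∀ y : H, S [] y = y := fun y => rfl
  have hSnon : ∀ t (x y : H), ‖S t x - S t y‖ ≤ ‖x - y‖ := by
    intro t
    induction t with
    | nil => intro x y; rw [hSnil, hSnil]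
    | cons i t ih =>
      intro x y
      rw [hScons, hScons]
      exact le_trans (ih _ _) (hPnon i x y)
  have hSfix : ∀ t (c : H), c ∈ ⋂ i, C i → S t c = c := by
    intro t
    induction t with
    | nil => intro c _; rw [hSnil]
    | cons i t ih =>
      intro c hc
      rw [hScons]
      have hPc : P i c = c := by
        have h := (hP i c).2 c (Set.mem_iInter.mp hc i)
        rw [sub_self, norm_zero] at h
        have h0 : ‖c - P i c‖ = 0 := le_antisymm h (norm_nonneg _)
        have := norm_eq_zero.mp h0
        rw [sub_eq_zero] at this
        exact this.symm
      rw [hPc]; exact ih c hc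
  have hSkey : ∀ t (x c : H), c ∈ ⋂ i, C i →
      ‖S t x - c‖ ≤ ‖x - c‖ ∧ (‖S t x - c‖ = ‖x - c‖ → S t x = x ∧ ∀ i ∈ t, x ∈ C i) := by
    intro t
    induction t with
    | nil =>
      intro x c _
      rw [hSnil]
      exact ⟨le_refl _, fun _ => ⟨rfl, by simp⟩⟩
    | cons i t ih =>
      intro x c hc
      have hci : c ∈ C i := Set.mem_iInter.mp hc i
      have hstepi := hstep i x c hci
      have hPle : ‖P i x - c‖ ≤ ‖x - c‖ :=
        sq_le_imp_le (norm_nonneg _) (norm_nonneg _) (by nlinarith [sq_nonneg ‖x - P i x‖])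
      have ihx := ih (P i x) c hc
      rw [hScons]
      refine ⟨le_trans ihx.1 hPle, fun heq => ?_⟩
      have h1 : ‖P i x - c‖ = ‖x - c‖ :=
        le_antisymm hPle (by rw [← heq]; exact ihx.1)
      have hxP : P i x = x := by
        have h1sq : ‖P i x - c‖^2 = ‖x - c‖^2 := by rw [h1]
        have h2 : ‖x - P i x‖^2 ≤ 0 := by linarith
        have h3 : ‖x - P i x‖ = 0 := by nlinarith [norm_nonneg (x - P i x)]
        have h4 := norm_eq_zero.mp h3
        rw [sub_eq_zero] at h4
        exact h4.symm
      have heq2 : ‖S t (P i x) - c‖ = ‖P i x - c‖ := by rw [heq, h1]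
      obtain ⟨hfix, hmem⟩ := ihx.2 heq2
      rw [hxP] at hfix hmem
      refine ⟨by rw [hxP]; exact hfix, ?_⟩
      intro j hj
      rcases List.mem_cons.mp hj with rfl | hj'
      · rw [← hxP]; exact (hP j x).1
      · exact hmem j hj'
  -- averaged operator
  set T : H → H := fun y => ∑ t ∈ Ω, w t • S t y with hTdef
  have hw0 : ∀ t ∈ Ω, (0:ℝ) ≤ w t := fun t ht => (hw t ht).1.le
  have hTfix : ∀ c ∈ ⋂ i, C i, T c = c := by
    intro c hc
    calc T c = ∑ t ∈ Ω, w t • c :=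
          Finset.sum_congr rfl fun t _ => by rw [hSfix t c hc]
      _ = (∑ t ∈ Ω, w t) • c := (Finset.sum_smul).symm
      _ = c := by rw [hw1, one_smul]
  have hTsub : ∀ x y : H, T x - T y = ∑ t ∈ Ω, w t • (S t x - S t y) := by
    intro x y
    rw [hTdef]
    simp only []
    rw [← Finset.sum_sub_distrib]
    exact Finset.sum_congr rfl fun t _ => (smul_sub _ _ _).symm
  have hTnon : ∀ x y : H, ‖T x - T y‖ ≤ ‖x - y‖ := by
    intro x y
    rw [hTsub]
    calc ‖∑ t ∈ Ω, w t • (S t x - S t y)‖ ≤ ∑ t ∈ Ω, ‖w t • (S t x - S t y)‖ :=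
          norm_sum_le _ _
      _ ≤ ∑ t ∈ Ω, w t * ‖x - y‖ := by
          apply Finset.sum_le_sum
          intro t ht
          rw [norm_smul, Real.norm_eq_abs, abs_of_nonneg (hw0 t ht)]
          exact mul_le_mul_of_nonneg_left (hSnon t x y) (hw0 t ht)
      _ = ‖x - y‖ := by rw [← Finset.sum_mul, hw1, one_mul]
  have hTfixonly : ∀ x : H, T x = x → x ∈ ⋂ i, C i := by
    intro x hx
    obtain ⟨c₀, hc₀⟩ := hC
    have hzle : ∀ t ∈ Ω, ‖S t x - c₀‖ ≤ ‖x - c₀‖ := fun t ht => (hSkey t x c₀ hc₀).1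
    have hsum : ∑ t ∈ Ω, w t • (S t x - c₀) = x - c₀ := by
      have e1 : ∑ t ∈ Ω, w t • (S t x - c₀)
          = (∑ t ∈ Ω, w t • S t x) - (∑ t ∈ Ω, w t • c₀) := by
        rw [← Finset.sum_sub_distrib]
        exact Finset.sum_congr rfl fun t _ => smul_sub _ _ _
      have e2 : ∑ t ∈ Ω, w t • S t x = x := hx
      have e3 : (∑ t ∈ Ω, w t • c₀ : H) = c₀ := by
        rw [← Finset.sum_smul, hw1, one_smul]
      rw [e1, e2, e3]
    have h3 : ∑ t ∈ Ω, w t * ⟪S t x - c₀, x - c₀⟫ = ‖x - c₀‖^2 := by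
      have := congrArg (fun z : H => ⟪z, x - c₀⟫) hsum
      simp only [sum_inner, real_inner_smul_left] at this
      rw [this, real_inner_self_eq_norm_sq]
    have hterm : ∀ t ∈ Ω, ⟪S t x - c₀, x - c₀⟫ ≤ ‖x - c₀‖^2 := by
      intro t ht
      have h := real_inner_le_norm (S t x - c₀) (x - c₀)
      nlinarith [hzle t ht, norm_nonneg (x - c₀)]
    have hzero : ∀ t ∈ Ω, w t * (‖x - c₀‖^2 - ⟪S t x - c₀, x - c₀⟫) = 0 := by
      have hsum0 : ∑ t ∈ Ω, w t * (‖x - c₀‖^2 - ⟪S t x - c₀, x - c₀⟫) = 0 := by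
        simp only [mul_sub]
        rw [Finset.sum_sub_distrib, ← Finset.sum_mul, hw1, one_mul, h3, sub_self]
      intro t ht
      exact (Finset.sum_eq_zero_iff_of_nonneg (fun t' ht' =>
        mul_nonneg (hw0 t' ht') (by linarith [hterm t' ht']))).mp hsum0 t ht
    have hfixall : ∀ t ∈ Ω, S t x = x := by
      intro t ht
      have h4 : ⟪S t x - c₀, x - c₀⟫ = ‖x - c₀‖^2 := by
        have hz := hzero t ht
        have hwt := (hw t ht).1
        have := mul_eq_zero.mp hz
        rcases this with h | h
        · exact absurd h (ne_of_gt hwt)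
        · linarith
      have h5 : ‖(S t x - c₀) - (x - c₀)‖^2 ≤ 0 := by
        rw [norm_sub_sq_real, h4]
        nlinarith [hzle t ht, norm_nonneg (x - c₀), norm_nonneg (S t x - c₀)]
      have h6 : (S t x - c₀) - (x - c₀) = 0 := by
        have := sq_nonneg ‖(S t x - c₀) - (x - c₀)‖
        have h7 : ‖(S t x - c₀) - (x - c₀)‖ = 0 := by
          nlinarith [norm_nonneg ((S t x - c₀) - (x - c₀))]
        exact norm_eq_zero.mp h7
      have : S t x - x = 0 := by
        have := h6
        abel_nf at this ⊢
        convert this using 1 <;> abel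
      rw [sub_eq_zero] at this
      exact this
    apply Set.mem_iInter.mpr
    intro i
    obtain ⟨t, htΩ, hit⟩ := hfit i
    have heqn : ‖S t x - c₀‖ = ‖x - c₀‖ := by rw [hfixall t htΩ]
    exact ((hSkey t x c₀ hc₀).2 heqn).2 i hit
  -- PROJECTION onto the intersection
  have hKcl : IsClosed (⋂ i, C i) := isClosed_iInter hCcl
  have hKconv : Convex ℝ (⋂ i, C i) := convex_iInter fun i => hCconv i
  obtain ⟨p, hpK, hpmin⟩ := exists_norm_eq_iInf_of_complete_convex hC hKcl.isComplete hKconv u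
  have hpdist : ∀ z ∈ ⋂ i, C i, ‖u - p‖ ≤ ‖u - z‖ := by
    intro z hz
    rw [hpmin]
    refine ciInf_le ⟨0, ?_⟩ (⟨z, hz⟩ : (⋂ i, C i))
    rintro r ⟨y, rfl⟩
    exact norm_nonneg _
  have hpVI : ∀ z ∈ ⋂ i, C i, ⟪u - p, z - p⟫ ≤ 0 :=
    (norm_eq_iInf_iff_real_inner_le_zero hKconv hpK).mp hpmin
  have hTp : T p = p := hTfix p hpK
  -- iteration via T
  have hit : ∀ k, x (k+1) = lam k • u + (1 - lam k) • T (x k) := by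
    intro k
    simp only [hTdef, hSdef]
    exact hiter k
  -- boundedness
  set M₀ := max ‖x 0 - p‖ ‖u - p‖ with hM₀def
  have hM₀0 : 0 ≤ M₀ := le_trans (norm_nonneg _) (le_max_left _ _)
  have hup : ‖u - p‖ ≤ M₀ := le_max_right _ _
  have hTnp : ∀ y : H, ‖T y - p‖ ≤ ‖y - p‖ := by
    intro y
    calc ‖T y - p‖ = ‖T y - T p‖ := by rw [hTp]
      _ ≤ ‖y - p‖ := hTnon y p
  have hbd : ∀ k, ‖x k - p‖ ≤ M₀ := by
    intro k
    induction k with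
    | zero => exact le_max_left _ _
    | succ k ih =>
      obtain ⟨hl0, hl1⟩ := hlam01 k
      have e : x (k+1) - p = lam k • (u - p) + (1 - lam k) • (T (x k) - p) := by
        rw [hit k]; module
      calc ‖x (k+1) - p‖ ≤ ‖lam k • (u - p)‖ + ‖(1 - lam k) • (T (x k) - p)‖ := by
            rw [e]; exact norm_add_le _ _
        _ = lam k * ‖u - p‖ + (1 - lam k) * ‖T (x k) - p‖ := by
            rw [norm_smul, norm_smul, Real.norm_eq_abs, Real.norm_eq_abs,
              abs_of_nonneg hl0, abs_of_nonneg (by linarith)]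
        _ ≤ lam k * M₀ + (1 - lam k) * M₀ := by
            have h1 := (hTnp (x k)).trans ih
            have h2 := hup
            have h3 : (0:ℝ) ≤ 1 - lam k := by linarith
            exact add_le_add (mul_le_mul_of_nonneg_left h2 hl0)
              (mul_le_mul_of_nonneg_left h1 h3)
        _ = M₀ := by ring
  set MB := ‖u - p‖ + M₀ with hMBdef
  have hMB0 : 0 ≤ MB := by positivity
  have hMB : ∀ k, ‖u - T (x k)‖ ≤ MB := by
    intro k
    have e : u - T (x k) = (u - p) + (p - T (x k)) := by abel
    calc ‖u - T (x k)‖ ≤ ‖u - p‖ + ‖p - T (x k)‖ := by rw [e]; exact norm_add_le _ _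
      _ ≤ ‖u - p‖ + M₀ := by
          have : ‖p - T (x k)‖ = ‖T (x k) - p‖ := norm_sub_rev _ _
          rw [this]
          exact add_le_add_right ((hTnp (x k)).trans (hbd k)) _
  -- ‖x (k+1) - x k‖ → 0
  have hd0 : Tendsto (fun k => ‖x (k+1) - x k‖) atTop (nhds 0) := by
    apply xu_lemma (fun k => ‖x (k+1) - x k‖) (fun _ => 0)
      (fun k => |lam (k+1) - lam k| * MB) (fun k => lam (k+1))
      (fun k => norm_nonneg _) (fun k => hlam01 (k+1))
      (fun h => hlamdiv ((summable_nat_add_iff 1).mp h))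
      (hlamvar.mul_right MB)
      (fun k => mul_nonneg (abs_nonneg _) hMB0)
      (fun ε hε => ⟨0, fun _ _ => hε.le⟩)
    intro k
    obtain ⟨hl0, hl1⟩ := hlam01 (k+1)
    have e : x (k+2) - x (k+1) = (lam (k+1) - lam k) • (u - T (x k))
        + (1 - lam (k+1)) • (T (x (k+1)) - T (x k)) := by
      rw [hit (k+1), hit k]; module
    calc ‖x (k+1+1) - x (k+1)‖
        ≤ ‖(lam (k+1) - lam k) • (u - T (x k))‖
          + ‖(1 - lam (k+1)) • (T (x (k+1)) - T (x k))‖ := by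
          rw [show k+1+1 = k+2 from rfl, e]; exact norm_add_le _ _
      _ ≤ |lam (k+1) - lam k| * MB + (1 - lam (k+1)) * ‖x (k+1) - x k‖ := by
          rw [norm_smul, norm_smul, Real.norm_eq_abs, Real.norm_eq_abs,
            abs_of_nonneg (by linarith : (0:ℝ) ≤ 1 - lam (k+1))]
          exact add_le_add (mul_le_mul_of_nonneg_left (hMB k) (abs_nonneg _))
            (mul_le_mul_of_nonneg_left (hTnon _ _) (by linarith))
      _ = (1 - lam (k+1)) * ‖x (k+1) - x k‖ + lam (k+1) * 0
          + |lam (k+1) - lam k| * MB := by ring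
  -- asymptotic regularity
  have hreg : Tendsto (fun k => ‖x k - T (x k)‖) atTop (nhds 0) := by
    have hub : ∀ k, ‖x k - T (x k)‖ ≤ ‖x (k+1) - x k‖ + lam k * MB := by
      intro k
      have e : x (k+1) - T (x k) = lam k • (u - T (x k)) := by rw [hit k]; module
      have h1 : ‖x (k+1) - T (x k)‖ ≤ lam k * MB := by
        rw [e, norm_smul, Real.norm_eq_abs, abs_of_nonneg (hlam01 k).1]
        exact mul_le_mul_of_nonneg_left (hMB k) (hlam01 k).1
      calc ‖x k - T (x k)‖ ≤ ‖x k - x (k+1)‖ + ‖x (k+1) - T (x k)‖ :=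
            norm_sub_le_norm_sub_add_norm_sub _ _ _
        _ ≤ ‖x (k+1) - x k‖ + lam k * MB := by
            rw [norm_sub_rev]
            exact add_le_add_right h1 _
    have hlim : Tendsto (fun k => ‖x (k+1) - x k‖ + lam k * MB) atTop (nhds 0) := by
      have := hd0.add (hlam0.mul_const MB)
      simpa using this
    exact squeeze_zero (fun k => norm_nonneg _) hub hlim
  -- bound on iterates
  have hxbd : ∀ k, ‖x k‖ ≤ M₀ + ‖p‖ := by
    intro k
    calc ‖x k‖ = ‖(x k - p) + p‖ := by rw [sub_add_cancel]
      _ ≤ ‖x k - p‖ + ‖p‖ := norm_add_le _ _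
      _ ≤ M₀ + ‖p‖ := add_le_add_left (hbd k) _
  -- KEY CLAIM: limsup ⟪u - p, x k - p⟫ ≤ 0
  have hkey : ∀ ε > (0:ℝ), ∃ N, ∀ k ≥ N, ⟪u - p, x k - p⟫ ≤ ε := by
    by_contra hcon
    push_neg at hcon
    obtain ⟨ε, hε, hfreq⟩ := hcon
    have hfr : ∃ᶠ k in atTop, ε < ⟪u - p, x k - p⟫ := by
      rw [frequently_atTop]
      intro N
      obtain ⟨k, hk1, hk2⟩ := hfreq N
      exact ⟨k, hk1, hk2⟩
    have hne : (atTop ⊓ Filter.principal {k | ε < ⟪u - p, x k - p⟫}).NeBot :=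
      frequently_iff_neBot.mp hfr
    set U : Ultrafilter ℕ :=
      Ultrafilter.of (atTop ⊓ Filter.principal {k | ε < ⟪u - p, x k - p⟫}) with hUdef
    have hUle : (U : Filter ℕ) ≤ atTop ⊓ Filter.principal {k | ε < ⟪u - p, x k - p⟫} :=
      Ultrafilter.of_le _
    have hUat : (U : Filter ℕ) ≤ atTop := hUle.trans inf_le_left
    have hUset : ∀ᶠ k in (U : Filter ℕ), ε < ⟪u - p, x k - p⟫ := by
      have h1 : (U : Filter ℕ) ≤ Filter.principal {k | ε < ⟪u - p, x k - p⟫} :=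
        hUle.trans inf_le_right
      exact Filter.eventually_iff.mpr (le_principal_iff.mp h1)
    obtain ⟨q, hqn, hq⟩ := exists_weak_ultra_limit U x (M₀ + ‖p‖) hxbd
    -- q is a fixed point of T
    have hTq : T q = q := by
      have heU : Tendsto (fun k => ‖x k - T (x k)‖) (U : Filter ℕ) (nhds 0) :=
        hreg.mono_left hUat
      set v := q - T q with hvdef
      have hineq : ∀ k, 2 * (⟪v, x k⟫ - ⟪v, q⟫) + ‖v‖^2
          ≤ 2 * ‖x k - T (x k)‖ * ‖x k - q‖ + ‖x k - T (x k)‖^2 := by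
        intro k
        have h1 : ‖x k - T q‖ ≤ ‖x k - T (x k)‖ + ‖x k - q‖ := by
          have e : x k - T q = (x k - T (x k)) + (T (x k) - T q) := by abel
          calc ‖x k - T q‖ ≤ ‖x k - T (x k)‖ + ‖T (x k) - T q‖ := by
                rw [e]; exact norm_add_le _ _
            _ ≤ ‖x k - T (x k)‖ + ‖x k - q‖ := add_le_add_right (hTnon _ _) _
        have h2 : ‖x k - T q‖^2 = ‖x k - q‖^2 + 2*⟪x k - q, v⟫ + ‖v‖^2 := by
          have e : x k - T q = (x k - q) + v := by rw [hvdef]; abel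
          rw [e, norm_add_sq_real]
        have h3 : ⟪x k - q, v⟫ = ⟪v, x k⟫ - ⟪v, q⟫ := by
          rw [real_inner_comm, inner_sub_right]
        have h4 : ‖x k - T q‖^2 ≤ (‖x k - T (x k)‖ + ‖x k - q‖)^2 := by
          have := norm_nonneg (x k - T q)
          nlinarith [norm_nonneg (x k - T (x k)), norm_nonneg (x k - q)]
        rw [h3] at h2
        nlinarith
      have hLHS : Tendsto (fun k => 2 * (⟪v, x k⟫ - ⟪v, q⟫) + ‖v‖^2) (U : Filter ℕ)
          (nhds (‖v‖^2)) := by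
        have h1 := ((hq v).sub_const ⟪v, q⟫).const_mul 2
        have h2 := h1.add_const (‖v‖^2)
        have e : (2 * (⟪v, q⟫ - ⟪v, q⟫) + ‖v‖^2) = ‖v‖^2 := by ring
        rw [e] at h2
        exact h2
      have hRHS : Tendsto (fun k => 2 * ‖x k - T (x k)‖ * ‖x k - q‖ + ‖x k - T (x k)‖^2)
          (U : Filter ℕ) (nhds 0) := by
        apply squeeze_zero (fun k => by positivity)
          (g := fun k => 2 * ‖x k - T (x k)‖ * (M₀ + ‖p‖ + ‖q‖) + ‖x k - T (x k)‖^2)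
        · intro k
          have hb : ‖x k - q‖ ≤ M₀ + ‖p‖ + ‖q‖ := by
            calc ‖x k - q‖ ≤ ‖x k‖ + ‖q‖ := norm_sub_le _ _
              _ ≤ M₀ + ‖p‖ + ‖q‖ := add_le_add_left (hxbd k) _
          have h0 := norm_nonneg (x k - T (x k))
          nlinarith
        · have h1 := (heU.const_mul 2).mul_const (M₀ + ‖p‖ + ‖q‖)
          have h2 := heU.mul heU
          have h3 := h1.add h2
          simp only [mul_zero, zero_mul, add_zero] at h3
          apply h3.congr
          intro k
          ring
      have hle : ‖v‖^2 ≤ 0 := le_of_tendsto_of_tendsto' hLHS hRHS hineq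
      have hv0 : ‖v‖ = 0 := by nlinarith [norm_nonneg v]
      have := norm_eq_zero.mp hv0
      rw [hvdef, sub_eq_zero] at this
      exact this.symm
    have hqK : q ∈ ⋂ i, C i := hTfixonly q hTq
    have hL : ⟪u - p, q - p⟫ ≤ 0 := hpVI q hqK
    have hsU : Tendsto (fun k => ⟪u - p, x k - p⟫) (U : Filter ℕ)
        (nhds ⟪u - p, q - p⟫) := by
      have h1 := (hq (u - p)).sub_const ⟪u - p, p⟫
      have h2 : ∀ k, ⟪u - p, x k⟫ - ⟪u - p, p⟫ = ⟪u - p, x k - p⟫ := fun k => by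
        rw [inner_sub_right]
      have h3 : ⟪u - p, q⟫ - ⟪u - p, p⟫ = ⟪u - p, q - p⟫ := by rw [inner_sub_right]
      rw [← h3]
      exact h1.congr h2
    have hgeq : ε ≤ ⟪u - p, q - p⟫ :=
      ge_of_tendsto hsU (hUset.mono fun k hk => hk.le)
    linarith
  -- final recursion
  have hrecfin : ∀ k, ‖x (k+1) - p‖^2 ≤ (1 - lam k) * ‖x k - p‖^2
      + lam k * (2 * ⟪u - p, x (k+1) - p⟫) + 0 := by
    intro k
    obtain ⟨hl0, hl1⟩ := hlam01 k
    have e : x (k+1) - p = (1 - lam k) • (T (x k) - p) + lam k • (u - p) := by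
      rw [hit k]; module
    have h2 : ‖x (k+1) - p‖^2 ≤ ‖(1 - lam k) • (T (x k) - p)‖^2
        + 2 * (lam k * ⟪u - p, x (k+1) - p⟫) := by
      have hBip : lam k * ⟪u - p, x (k+1) - p⟫ = ⟪lam k • (u - p), x (k+1) - p⟫ :=
        (real_inner_smul_left _ _ _).symm
      have hsplit : ⟪lam k • (u - p), x (k+1) - p⟫
          = ⟪(1 - lam k) • (T (x k) - p), lam k • (u - p)⟫ + ‖lam k • (u - p)‖^2 := by
        nth_rewrite 1 [e]
        rw [inner_add_right, real_inner_self_eq_norm_sq, real_inner_comm]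
      have hexp : ‖x (k+1) - p‖^2 = ‖(1 - lam k) • (T (x k) - p)‖^2
          + 2*⟪(1 - lam k) • (T (x k) - p), lam k • (u - p)⟫ + ‖lam k • (u - p)‖^2 := by
        rw [e, norm_add_sq_real]
      rw [hBip, hsplit]
      linarith [sq_nonneg ‖lam k • (u - p)‖]
    have h3 : ‖(1 - lam k) • (T (x k) - p)‖^2 ≤ (1 - lam k) * ‖x k - p‖^2 := by
      rw [norm_smul, Real.norm_eq_abs, abs_of_nonneg (by linarith : (0:ℝ) ≤ 1 - lam k),
        mul_pow]
      have hT := hTnp (x k)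
      have hA : (1 - lam k)^2 ≤ 1 - lam k := by nlinarith
      have hB : ‖T (x k) - p‖^2 ≤ ‖x k - p‖^2 := by
        nlinarith [norm_nonneg (T (x k) - p), norm_nonneg (x k - p)]
      exact mul_le_mul hA hB (sq_nonneg _) (by linarith)
    linarith
  have hsqto0 : Tendsto (fun k => ‖x k - p‖^2) atTop (nhds 0) := by
    apply xu_lemma (fun k => ‖x k - p‖^2) (fun k => 2 * ⟪u - p, x (k+1) - p⟫)
      (fun _ => 0) lam (fun k => sq_nonneg _) hlam01 hlamdiv summable_zero
      (fun _ => le_refl 0) ?_ hrecfin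
    intro ε hε
    obtain ⟨N, hN⟩ := hkey (ε/2) (by linarith)
    refine ⟨N, fun k hk => ?_⟩
    have := hN (k+1) (by omega)
    show 2 * ⟪u - p, x (k+1) - p⟫ ≤ ε
    linarith
  refine ⟨p, hpK, hpdist, ?_⟩
  rw [tendsto_iff_norm_sub_tendsto_zero]
  have hcont : Tendsto (fun k => Real.sqrt (‖x k - p‖^2)) atTop (nhds (Real.sqrt 0)) :=
    (Real.continuous_sqrt.tendsto 0).comp hsqto0
  rw [Real.sqrt_zero] at hcont
  apply hcont.congr
  intro k
  exact Real.sqrt_sq (norm_nonneg _)
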